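/- arXiv:2510.24056 — 2 statements merged into one kernel-verified Lean document; each statement's English description precedes it below -/
import Mathlib

section
/- Let d ≥ 1 and let c₀ : ℝᵈ → ℝ be continuously differentiable and strictly positive on the open cube (0,1)ᵈ. Let g : ℝᵈ → ℝᵈ have components g₁,…,g_d that are continuously differentiable on (0,1)ᵈ, extend continuously to the closed cube [0,1]ᵈ, and satisfy the boundary conditions g_j(u) = 0 whenever u_j = 0 or u_j = 1. Assume that for every j the functions u ↦ ∂_{u_j}g_j(u)·c₀(u) and u ↦ g_j(u)·∂_{u_j}c₀(u) are Lebesgue integrable on (0,1)ᵈ. Then ∫_{(0,1)ᵈ} Σ_{j=1}^d [∂_{u_j}g_j(u)·c₀(u) + g_j(u)·∂_{u_j}c₀(u)] du = 0; equivalently, ∫_{(0,1)ᵈ} Σ_{j=1}^d [∂_{u_j}g_j(u) + g_j(u)·∂_{u_j}log c₀(u)] c₀(u) du = 0. -/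
/-!
Fix a coordinate `j`. By Fubini it suffices to integrate `∂ⱼgⱼ · c₀ + gⱼ · ∂ⱼc₀ = ∂ⱼ(gⱼ c₀)` along
each segment parallel to the `j`-th axis. On such a segment, with `G` and `C` the restrictions of
`gⱼ` and `c₀`, the product `G C` has an integrable derivative, so it has limits at both endpoints
and the integral is their difference. Both limits vanish: if `G C → L ≠ 0` at an endpoint where
`G → 0`, then near that endpoint `(log |G|)' = G' C / (G C)` is integrable, so `log |G|` has a
finite limit, which is absurd. The second identity is the first one rewritten with
`∂ⱼ log c₀ = ∂ⱼc₀ / c₀`.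
-/

open MeasureTheory Set Filter Topology

noncomputable def pderivCoord {d : ℕ} (j : Fin d) (f : (Fin d → ℝ) → ℝ)
    (u : Fin d → ℝ) : ℝ :=
  deriv (fun x => f (Function.update u j x)) (u j)

theorem exists_tendsto_of_hasDerivAt_of_integrableOn {E : Type*} [NormedAddCommGroup E]
    [NormedSpace ℝ E] [CompleteSpace E] {f f' : ℝ → E} {a b : ℝ} (hab : a < b)
    (hderiv : ∀ x ∈ Ioo a b, HasDerivAt f (f' x) x) (hint : IntegrableOn f' (Ioo a b)) :
    (∃ L, Tendsto f (𝓝[>] a) (𝓝 L)) ∧ ∃ L, Tendsto f (𝓝[<] b) (𝓝 L) := by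
  obtain ⟨c, hc⟩ : (Ioo a b).Nonempty := nonempty_Ioo.2 hab
  have hf'I : IntervalIntegrable f' volume a b :=
    (intervalIntegrable_iff_integrableOn_Ioo_of_le hab.le).2 hint
  set F : ℝ → E := fun x => f c + ∫ t in c..x, f' t
  have hF : ContinuousOn F (Icc a b) := by
    have := intervalIntegral.continuousOn_primitive_interval' hf'I
      (by rw [uIcc_of_le hab.le]; exact Ioo_subset_Icc_self hc)
    rw [uIcc_of_le hab.le] at this
    exact continuousOn_const.add this
  have hfF : ∀ x ∈ Ioo a b, F x = f x := by
    intro x hx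
    have hsub : uIcc c x ⊆ Ioo a b := ordConnected_Ioo.uIcc_subset hc hx
    change f c + _ = _
    rw [intervalIntegral.integral_eq_sub_of_hasDerivAt (fun t ht => hderiv t (hsub ht))
      (hf'I.mono_set (hsub.trans Ioo_subset_Icc_self |>.trans (uIcc_of_le hab.le).symm.subset)),
      add_sub_cancel]
  refine ⟨⟨F a, ?_⟩, ⟨F b, ?_⟩⟩
  · rw [← nhdsWithin_Ioo_eq_nhdsGT hab]
    exact tendsto_nhdsWithin_congr hfF
      ((hF a (left_mem_Icc.2 hab.le)).mono Ioo_subset_Icc_self)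
  · rw [← nhdsWithin_Ioo_eq_nhdsLT hab]
    exact tendsto_nhdsWithin_congr hfF
      ((hF b (right_mem_Icc.2 hab.le)).mono Ioo_subset_Icc_self)

section OneDim

variable {G G' C : ℝ → ℝ} {a b : ℝ}

theorem integrableOn_deriv_div_of_le_abs_mul {s : Set ℝ} {δ : ℝ}
    (hs : MeasurableSet s) (hδ : 0 < δ) (hGC : ContinuousOn (fun x => G x * C x) s)
    (hint : IntegrableOn (fun x => G' x * C x) s) (hle : ∀ x ∈ s, δ ≤ |G x * C x|) :
    IntegrableOn (fun x => G' x / G x) s := by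
  have hne : ∀ x ∈ s, G x * C x ≠ 0 := fun x hx => abs_pos.1 (hδ.trans_le (hle x hx))
  have hbdd : IntegrableOn (fun x => G' x * C x * (G x * C x)⁻¹) s :=
    hint.mul_bdd ((hGC.inv₀ hne).aestronglyMeasurable hs) (c := δ⁻¹) <| by
      filter_upwards [ae_restrict_mem hs] with x hx
      rw [norm_inv, Real.norm_eq_abs]
      exact inv_anti₀ hδ (hle x hx)
  refine hbdd.congr_fun (fun x hx => ?_) hs
  have hC : C x ≠ 0 := right_ne_zero_of_mul (hne x hx)
  field_simp

theorem not_tendsto_zero_of_le_abs_mul {δ : ℝ} (hab : a < b) (hδ : 0 < δ)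
    (hG : ∀ x ∈ Ioo a b, HasDerivAt G (G' x) x) (hC : ContinuousOn C (Ioo a b))
    (hint : IntegrableOn (fun x => G' x * C x) (Ioo a b))
    (hle : ∀ x ∈ Ioo a b, δ ≤ |G x * C x|) :
    ¬Tendsto G (𝓝[>] a) (𝓝 0) ∧ ¬Tendsto G (𝓝[<] b) (𝓝 0) := by
  have hne : ∀ x ∈ Ioo a b, G x ≠ 0 := fun x hx =>
    left_ne_zero_of_mul (abs_pos.1 (hδ.trans_le (hle x hx)))
  have hGcont : ContinuousOn G (Ioo a b) := fun x hx =>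
    (hG x hx).continuousAt.continuousWithinAt
  have hlog : ∀ x ∈ Ioo a b, HasDerivAt (fun x => Real.log (G x)) (G' x / G x) x :=
    fun x hx => (hG x hx).log (hne x hx)
  obtain ⟨⟨La, hLa⟩, ⟨Lb, hLb⟩⟩ := exists_tendsto_of_hasDerivAt_of_integrableOn hab hlog
    (integrableOn_deriv_div_of_le_abs_mul measurableSet_Ioo hδ (hGcont.mul hC) hint hle)
  -- `Real.log` is `log |·|`, so no sign condition on `G` is needed
  have key : ∀ {l : Filter ℝ} [l.NeBot] {L : ℝ}, (∀ᶠ x in l, x ∈ Ioo a b) →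
      Tendsto (fun x => Real.log (G x)) l (𝓝 L) → ¬Tendsto G l (𝓝 0) := by
    intro l _ L hl hL hG0
    exact not_tendsto_nhds_of_tendsto_atBot (Real.tendsto_log_nhdsNE_zero.comp
      (tendsto_nhdsWithin_iff.2 ⟨hG0, hl.mono hne⟩)) L hL
  exact ⟨key (Ioo_mem_nhdsGT hab) hLa, key (Ioo_mem_nhdsLT hab) hLb⟩

theorem eq_zero_of_tendsto_mul_nhdsGT {L : ℝ} (hab : a < b)
    (hG : ∀ x ∈ Ioo a b, HasDerivAt G (G' x) x) (hC : ContinuousOn C (Ioo a b))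
    (hint : IntegrableOn (fun x => G' x * C x) (Ioo a b))
    (hG0 : Tendsto G (𝓝[>] a) (𝓝 0)) (hGC : Tendsto (fun x => G x * C x) (𝓝[>] a) (𝓝 L)) :
    L = 0 := by
  by_contra hL
  have hL2 : |L| / 2 < |L| := half_lt_self (abs_pos.2 hL)
  obtain ⟨c, hac, hsub⟩ := (mem_nhdsGT_iff_exists_Ioo_subset' hab).1
    (inter_mem (Ioo_mem_nhdsGT hab) (hGC.abs.eventually_const_le hL2))
  have hcb : Ioo a c ⊆ Ioo a b := fun x hx => (hsub hx).1
  exact (not_tendsto_zero_of_le_abs_mul hac (half_pos (abs_pos.2 hL))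
    (fun x hx => hG x (hcb hx)) (hC.mono hcb) (hint.mono_set hcb)
    (fun x hx => (hsub hx).2)).1 hG0

theorem eq_zero_of_tendsto_mul_nhdsLT {L : ℝ} (hab : a < b)
    (hG : ∀ x ∈ Ioo a b, HasDerivAt G (G' x) x) (hC : ContinuousOn C (Ioo a b))
    (hint : IntegrableOn (fun x => G' x * C x) (Ioo a b))
    (hG0 : Tendsto G (𝓝[<] b) (𝓝 0)) (hGC : Tendsto (fun x => G x * C x) (𝓝[<] b) (𝓝 L)) :
    L = 0 := by
  by_contra hL
  have hL2 : |L| / 2 < |L| := half_lt_self (abs_pos.2 hL)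
  obtain ⟨c, hcb, hsub⟩ := (mem_nhdsLT_iff_exists_Ioo_subset' hab).1
    (inter_mem (Ioo_mem_nhdsLT hab) (hGC.abs.eventually_const_le hL2))
  have hac : Ioo c b ⊆ Ioo a b := fun x hx => (hsub hx).1
  exact (not_tendsto_zero_of_le_abs_mul hcb (half_pos (abs_pos.2 hL))
    (fun x hx => hG x (hac hx)) (hC.mono hac) (hint.mono_set hac)
    (fun x hx => (hsub hx).2)).2 hG0

theorem integral_Ioo_deriv_mul_add_mul_deriv_eq_zero {C' : ℝ → ℝ} (hab : a < b)
    (hGcont : ContinuousOn G (Icc a b)) (hGa : G a = 0) (hGb : G b = 0)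
    (hG : ∀ x ∈ Ioo a b, HasDerivAt G (G' x) x) (hC : ∀ x ∈ Ioo a b, HasDerivAt C (C' x) x)
    (h1 : IntegrableOn (fun x => G' x * C x) (Ioo a b))
    (h2 : IntegrableOn (fun x => G x * C' x) (Ioo a b)) :
    ∫ x in Ioo a b, (G' x * C x + G x * C' x) = 0 := by
  have hGC : ∀ x ∈ Ioo a b, HasDerivAt (fun x => G x * C x) (G' x * C x + G x * C' x) x :=
    fun x hx => (hG x hx).mul (hC x hx)
  have hCcont : ContinuousOn C (Ioo a b) := fun x hx =>
    (hC x hx).continuousAt.continuousWithinAt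
  obtain ⟨⟨La, hLa⟩, ⟨Lb, hLb⟩⟩ :=
    exists_tendsto_of_hasDerivAt_of_integrableOn hab hGC (h1.add h2)
  have hG0a : Tendsto G (𝓝[>] a) (𝓝 0) := by
    simpa [ContinuousWithinAt, hGa, nhdsWithin_Ioo_eq_nhdsGT hab] using
      (hGcont a (left_mem_Icc.2 hab.le)).mono Ioo_subset_Icc_self
  have hG0b : Tendsto G (𝓝[<] b) (𝓝 0) := by
    simpa [ContinuousWithinAt, hGb, nhdsWithin_Ioo_eq_nhdsLT hab] using
      (hGcont b (right_mem_Icc.2 hab.le)).mono Ioo_subset_Icc_self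
  rw [← integral_Ioc_eq_integral_Ioo, ← intervalIntegral.integral_of_le hab.le,
    intervalIntegral.integral_eq_sub_of_hasDerivAt_of_tendsto hab hGC
      ((intervalIntegrable_iff_integrableOn_Ioo_of_le hab.le).2 (h1.add h2)) hLa hLb,
    eq_zero_of_tendsto_mul_nhdsGT hab hG hCcont h1 hG0a hLa,
    eq_zero_of_tendsto_mul_nhdsLT hab hG hCcont h1 hG0b hLb, sub_zero]

end OneDim

theorem hasDerivAt_pderivCoord {d : ℕ} (j : Fin d) {f : (Fin d → ℝ) → ℝ} {u : Fin d → ℝ}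
    (hf : DifferentiableAt ℝ f u) :
    HasDerivAt (fun x => f (Function.update u j x)) (pderivCoord j f u) (u j) := by
  rw [← Function.update_eq_self j u] at hf
  exact (hf.comp (u j) (hasDerivAt_update u j (u j)).differentiableAt).hasDerivAt

theorem pderivCoord_log {d : ℕ} (j : Fin d) {f : (Fin d → ℝ) → ℝ} {u : Fin d → ℝ}
    (hf : DifferentiableAt ℝ f u) (hu : f u ≠ 0) :
    pderivCoord j (fun v => Real.log (f v)) u = pderivCoord j f u / f u := by
  have := (hasDerivAt_pderivCoord j hf).log (by rwa [Function.update_eq_self])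
  rw [Function.update_eq_self] at this
  exact this.deriv

theorem hasDerivAt_insertNth_pderivCoord {n : ℕ} (j : Fin (n + 1))
    {f : (Fin (n + 1) → ℝ) → ℝ} {x : ℝ} {y : Fin n → ℝ}
    (hf : DifferentiableAt ℝ f (j.insertNth x y)) :
    HasDerivAt (fun t => f (j.insertNth t y)) (pderivCoord j f (j.insertNth x y)) x := by
  simpa [Fin.update_insertNth] using hasDerivAt_pderivCoord j hf

theorem preimage_insertNth_univ_pi {α : Type*} {n : ℕ} (j : Fin (n + 1))
    (s : Fin (n + 1) → Set α) :
    (fun p : α × (Fin n → α) => j.insertNth p.1 p.2) ⁻¹' univ.pi s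
      = s j ×ˢ univ.pi fun i => s (j.succAbove i) := by
  ext p
  simp [Fin.forall_iff_succAbove j]

section Slices

variable {E : Type*} [NormedAddCommGroup E] {n : ℕ} (j : Fin (n + 1))
  {s : Fin (n + 1) → Set ℝ} {F : (Fin (n + 1) → ℝ) → E}

theorem integrable_insertNth_of_integrableOn_univ_pi (hF : IntegrableOn F (univ.pi s)) :
    Integrable (fun p : ℝ × (Fin n → ℝ) => F (j.insertNth p.1 p.2))
      ((volume.restrict (s j)).prod (volume.restrict (univ.pi fun i => s (j.succAbove i)))) := by
  have hmp := (volume_preserving_piFinSuccAbove (fun _ : Fin (n + 1) => ℝ) j).symm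
  have := (hmp.integrableOn_comp_preimage (MeasurableEquiv.measurableEmbedding _)).2 hF
  rwa [MeasurableEquiv.piFinSuccAbove_symm_apply, Fin.insertNthEquiv, Equiv.coe_fn_mk,
    preimage_insertNth_univ_pi, Measure.volume_eq_prod, IntegrableOn,
    ← Measure.prod_restrict] at this

theorem setIntegral_univ_pi_eq_setIntegral_insertNth [NormedSpace ℝ E]
    (hF : IntegrableOn F (univ.pi s)) :
    ∫ u in univ.pi s, F u =
      ∫ y in univ.pi (fun i => s (j.succAbove i)), ∫ x in s j, F (j.insertNth x y) := by
  have hmp := (volume_preserving_piFinSuccAbove (fun _ : Fin (n + 1) => ℝ) j).symm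
  rw [← hmp.setIntegral_preimage_emb (MeasurableEquiv.measurableEmbedding _),
    MeasurableEquiv.piFinSuccAbove_symm_apply, Fin.insertNthEquiv, Equiv.coe_fn_mk,
    preimage_insertNth_univ_pi, Measure.volume_eq_prod, ← Measure.prod_restrict,
    integral_prod_symm _ (integrable_insertNth_of_integrableOn_univ_pi j hF)]

end Slices

theorem setIntegral_pderivCoord_mul_add_mul_pderivCoord_eq_zero {n : ℕ} (j : Fin (n + 1))
    {a b : Fin (n + 1) → ℝ} {G c : (Fin (n + 1) → ℝ) → ℝ}
    (hG : DifferentiableOn ℝ G (univ.pi fun i => Ioo (a i) (b i)))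
    (hc : DifferentiableOn ℝ c (univ.pi fun i => Ioo (a i) (b i)))
    (hGcont : ContinuousOn G (univ.pi fun i => Icc (a i) (b i)))
    (hbdry : ∀ u ∈ univ.pi fun i => Icc (a i) (b i), (u j = a j ∨ u j = b j) → G u = 0)
    (h1 : IntegrableOn (fun u => pderivCoord j G u * c u) (univ.pi fun i => Ioo (a i) (b i)))
    (h2 : IntegrableOn (fun u => G u * pderivCoord j c u) (univ.pi fun i => Ioo (a i) (b i))) :
    ∫ u in univ.pi fun i => Ioo (a i) (b i),
      (pderivCoord j G u * c u + G u * pderivCoord j c u) = 0 := by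
  have hopen : IsOpen (univ.pi fun i => Ioo (a i) (b i)) :=
    isOpen_set_pi finite_univ fun _ _ => isOpen_Ioo
  rw [setIntegral_univ_pi_eq_setIntegral_insertNth j
    (F := fun u => pderivCoord j G u * c u + G u * pderivCoord j c u) (h1.add h2)]
  refine integral_eq_zero_of_ae ?_
  filter_upwards [ae_restrict_mem (MeasurableSet.univ_pi fun _ => measurableSet_Ioo),
    (integrable_insertNth_of_integrableOn_univ_pi j h1).prod_left_ae,
    (integrable_insertNth_of_integrableOn_univ_pi j h2).prod_left_ae] with y hy hy1 hy2
  rcases le_or_gt (b j) (a j) with hba | hab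
  · simp [Ioo_eq_empty hba.not_gt]
  have hmemIoo :
      ∀ x ∈ Ioo (a j) (b j), j.insertNth x y ∈ univ.pi fun i => Ioo (a i) (b i) := by
    intro x hx
    simp only [mem_univ_pi, Fin.forall_iff_succAbove j, Fin.insertNth_apply_same,
      Fin.insertNth_apply_succAbove] at hy ⊢
    exact ⟨hx, hy⟩
  have hmemIcc :
      ∀ x ∈ Icc (a j) (b j), j.insertNth x y ∈ univ.pi fun i => Icc (a i) (b i) := by
    intro x hx
    simp only [mem_univ_pi, Fin.forall_iff_succAbove j, Fin.insertNth_apply_same, hx,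
      Fin.insertNth_apply_succAbove, true_and] at hy ⊢
    exact fun i => Ioo_subset_Icc_self (hy i)
  have hcont : Continuous fun x : ℝ => j.insertNth (α := fun _ => ℝ) x y := by fun_prop
  have hdiff : ∀ {f}, DifferentiableOn ℝ f (univ.pi fun i => Ioo (a i) (b i)) →
      ∀ x ∈ Ioo (a j) (b j), HasDerivAt (fun t => f (j.insertNth t y))
        (pderivCoord j f (j.insertNth x y)) x := fun hf x hx =>
    hasDerivAt_insertNth_pderivCoord j (hf.differentiableAt (hopen.mem_nhds (hmemIoo x hx)))
  exact integral_Ioo_deriv_mul_add_mul_deriv_eq_zero hab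
    (hGcont.comp hcont.continuousOn hmemIcc)
    (hbdry _ (hmemIcc _ (left_mem_Icc.2 hab.le)) (by simp))
    (hbdry _ (hmemIcc _ (right_mem_Icc.2 hab.le)) (by simp))
    (hdiff hG) (hdiff hc) hy1 hy2

theorem stein_identity_general (d : ℕ)
    (c₀ : (Fin d → ℝ) → ℝ) (g : (Fin d → ℝ) → Fin d → ℝ)
    (Ω : Set (Fin d → ℝ)) (hΩ : Ω = Set.univ.pi fun _ => Set.Ioo (0:ℝ) 1)
    (hc : ContDiffOn ℝ 1 c₀ Ω) (hcpos : ∀ u ∈ Ω, 0 < c₀ u)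
    (hg : ∀ j, ContDiffOn ℝ 1 (fun u => g u j) Ω)
    (hgcont : ∀ j, ContinuousOn (fun u => g u j)
      (Set.univ.pi fun _ => Set.Icc (0:ℝ) 1))
    (hbdry : ∀ j, ∀ u ∈ Set.univ.pi fun _ : Fin d => Set.Icc (0:ℝ) 1,
      (u j = 0 ∨ u j = 1) → g u j = 0)
    (hint1 : ∀ j, IntegrableOn
      (fun u => pderivCoord j (fun v => g v j) u * c₀ u) Ω volume)
    (hint2 : ∀ j, IntegrableOn
      (fun u => g u j * pderivCoord j c₀ u) Ω volume) :
    (∫ u in Ω, ∑ j, (pderivCoord j (fun v => g v j) u * c₀ u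
        + g u j * pderivCoord j c₀ u)) = 0 ∧
    (∫ u in Ω, (∑ j, (pderivCoord j (fun v => g v j) u
        + g u j * pderivCoord j (fun v => Real.log (c₀ v)) u)) * c₀ u) = 0 := by
  subst hΩ
  have hcoord : ∀ j, ∫ u in univ.pi fun _ => Ioo (0:ℝ) 1,
      (pderivCoord j (fun v => g v j) u * c₀ u + g u j * pderivCoord j c₀ u) = 0 := by
    intro j
    obtain ⟨n, rfl⟩ := Nat.exists_eq_add_one_of_ne_zero j.pos.ne'
    exact setIntegral_pderivCoord_mul_add_mul_pderivCoord_eq_zero j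
      ((hg j).differentiableOn one_ne_zero) (hc.differentiableOn one_ne_zero) (hgcont j)
      (hbdry j) (hint1 j) (hint2 j)
  have hsum : ∫ u in univ.pi fun _ => Ioo (0:ℝ) 1, ∑ j,
      (pderivCoord j (fun v => g v j) u * c₀ u + g u j * pderivCoord j c₀ u) = 0 := by
    rw [integral_finsetSum (f := fun j u => pderivCoord j (fun v => g v j) u * c₀ u
      + g u j * pderivCoord j c₀ u) _ fun j _ => (hint1 j).add (hint2 j)]
    exact Finset.sum_eq_zero fun j _ => hcoord j
  refine ⟨hsum, (setIntegral_congr_fun (MeasurableSet.univ_pi fun _ => measurableSet_Ioo)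
    fun u hu => ?_).trans hsum⟩
  have hdiff : DifferentiableAt ℝ c₀ u := (hc.differentiableOn one_ne_zero).differentiableAt
    ((isOpen_set_pi finite_univ fun _ _ => isOpen_Ioo).mem_nhds hu)
  simp only [Finset.sum_mul, add_mul, pderivCoord_log _ hdiff (hcpos u hu).ne', mul_assoc,
    div_mul_cancel₀ _ (hcpos u hu).ne']

/-- **Stein identity for the Copula-Stein operator.** If `c₀` is `C¹` and positive on
`(0,1)ᵈ`, and `g` has `C¹` components extending continuously to `[0,1]ᵈ` that vanish on
the faces `{u_j = 0}` and `{u_j = 1}`, with the relevant integrability, then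
`∫ Σⱼ [∂ⱼgⱼ·c₀ + gⱼ·∂ⱼc₀] = 0`; equivalently `∫ Σⱼ [∂ⱼgⱼ + gⱼ·∂ⱼ log c₀] c₀ = 0`. -/
theorem stein_identity (d : ℕ) (hd : 1 ≤ d)
    (c₀ : (Fin d → ℝ) → ℝ) (g : (Fin d → ℝ) → Fin d → ℝ)
    (Ω : Set (Fin d → ℝ)) (hΩ : Ω = Set.univ.pi fun _ => Set.Ioo (0:ℝ) 1)
    (hc : ContDiffOn ℝ 1 c₀ Ω) (hcpos : ∀ u ∈ Ω, 0 < c₀ u)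
    (hg : ∀ j, ContDiffOn ℝ 1 (fun u => g u j) Ω)
    (hgcont : ∀ j, ContinuousOn (fun u => g u j)
      (Set.univ.pi fun _ => Set.Icc (0:ℝ) 1))
    (hbdry : ∀ j, ∀ u ∈ Set.univ.pi fun _ : Fin d => Set.Icc (0:ℝ) 1,
      (u j = 0 ∨ u j = 1) → g u j = 0)
    (hint1 : ∀ j, IntegrableOn
      (fun u => pderivCoord j (fun v => g v j) u * c₀ u) Ω volume)
    (hint2 : ∀ j, IntegrableOn
      (fun u => g u j * pderivCoord j c₀ u) Ω volume) :
    (∫ u in Ω, ∑ j, (pderivCoord j (fun v => g v j) u * c₀ u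
        + g u j * pderivCoord j c₀ u)) = 0 ∧
    (∫ u in Ω, (∑ j, (pderivCoord j (fun v => g v j) u
        + g u j * pderivCoord j (fun v => Real.log (c₀ v)) u)) * c₀ u) = 0 :=
  stein_identity_general d c₀ g Ω hΩ hc hcpos hg hgcont hbdry hint1 hint2
end

section
/- Let X be a measurable space, μ a probability measure on X, and H a real Hilbert space. Let ξ : X → H be strongly measurable with ∫ ξ dμ = 0, m₂ := ∫ ‖ξ(x)‖² dμ(x) < ∞ and m₄ := ∫ ‖ξ(x)‖⁴ dμ(x) < ∞. Let U₁,…,U_n be independent with law μ and set V_n = (1/n²) Σ_{i,j=1}^n ⟨ξ(U_i), ξ(U_j)⟩. Then Var(V_n) ≤ (3·m₂² + m₄)/n². -/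
/-! Since `∑ᵢ ∑ⱼ ⟪ξ(Uᵢ), ξ(Uⱼ)⟫ = ‖S‖²` with `S = ∑ᵢ ξ(Uᵢ)`, the variance of `Vₙ` is at most
`E‖S‖⁴ / n⁴`. Adding one more independent centred summand `Y` to a centred `S` and expanding
`‖S + Y‖⁴ = (‖S‖² + 2⟪S, Y⟫ + ‖Y‖²)²`, the terms `‖S‖²⟪S, Y⟫` and `‖Y‖²⟪S, Y⟫` have mean zero
and `⟪S, Y⟫² ≤ ‖S‖²‖Y‖²`, so `E‖S + Y‖⁴ ≤ E‖S‖⁴ + 6 E‖S‖² E‖Y‖² + E‖Y‖⁴`, while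
`E‖S + Y‖² = E‖S‖² + E‖Y‖²`. Induction over the summands gives `E‖S‖⁴ ≤ 3 (n m₂)² + n m₄`. -/

open MeasureTheory ProbabilityTheory
open scoped RealInnerProductSpace

lemma norm_add_pow_four_le {H : Type*} [NormedAddCommGroup H] [InnerProductSpace ℝ H]
    (a b : H) :
    ‖a + b‖ ^ 4 ≤ ‖a‖ ^ 4 + 6 * (‖a‖ ^ 2 * ‖b‖ ^ 2) + ‖b‖ ^ 4
      + 4 * ⟪‖a‖ ^ 2 • a, b⟫ + 4 * ⟪a, ‖b‖ ^ 2 • b⟫ := by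
  have hcs : ⟪a, b⟫ ^ 2 ≤ ‖a‖ ^ 2 * ‖b‖ ^ 2 := by
    rw [← mul_pow]
    exact sq_le_sq' (abs_le.mp (abs_real_inner_le_norm a b)).1
      (abs_le.mp (abs_real_inner_le_norm a b)).2
  rw [real_inner_smul_left, real_inner_smul_right,
    show ‖a + b‖ ^ 4 = (‖a + b‖ ^ 2) ^ 2 by ring, norm_add_sq_real]
  nlinarith [hcs]

lemma sum_sum_inner_eq_norm_sum_sq {ι H : Type*} [NormedAddCommGroup H] [InnerProductSpace ℝ H]
    (s : Finset ι) (v : ι → H) :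
    ∑ i ∈ s, ∑ j ∈ s, ⟪v i, v j⟫ = ‖∑ i ∈ s, v i‖ ^ 2 := by
  rw [← real_inner_self_eq_norm_sq, sum_inner]
  simp_rw [inner_sum]

namespace MeasureTheory

variable {Ω E : Type*} [MeasurableSpace Ω] {P : Measure Ω} [NormedAddCommGroup E]

lemma memLp_of_integrable_norm_pow {f : Ω → E} (hf : AEStronglyMeasurable f P) {p : ℕ}
    (hp : p ≠ 0) (h : Integrable (fun ω => ‖f ω‖ ^ p) P) : MemLp f p P :=
  (integrable_norm_rpow_iff hf (by exact_mod_cast hp) (by simp)).mp (by simpa using h)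

lemma integral_comp_of_map_eq {X : Type*} [MeasurableSpace X] [NormedSpace ℝ E] {μ : Measure X}
    {U : Ω → X} (hU : AEMeasurable U P) (hlaw : P.map U = μ) {g : X → E}
    (hg : AEStronglyMeasurable g μ) : ∫ ω, g (U ω) ∂P = ∫ x, g x ∂μ := by
  subst hlaw
  exact (integral_map hU hg).symm

lemma MemLp.integrable_norm_sq_smul [NormedSpace ℝ E] [IsFiniteMeasure P] {A : Ω → E}
    (hA : MemLp A 4 P) :
    Integrable (fun ω => ‖A ω‖ ^ 2 • A ω) P := by
  have h3 : Integrable (fun ω => ‖A ω‖ ^ 3) P :=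
    (hA.mono_exponent (p := (3 : ℕ)) (by norm_num)).integrable_norm_pow'
  refine h3.mono' (hA.1.norm.pow 2 |>.smul hA.1) (ae_of_all _ fun ω => ?_)
  rw [norm_smul, norm_pow, norm_norm]
  exact (pow_succ _ 2).ge

end MeasureTheory

namespace ProbabilityTheory

variable {Ω : Type*} [MeasurableSpace Ω] {P : Measure Ω}

/- Independence is transported from the `Uᵢ`, not stated for `H`-valued variables: on a
non-separable `H` addition need not be Borel measurable, so sums of independent `H`-valued
variables cannot be handled directly. -/
lemma iIndepFun.indepFun_comp_finsetSum {ι X H : Type*} [MeasurableSpace X] [NormedAddCommGroup H]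
    [MeasurableSpace H] [BorelSpace H] {U : ι → Ω → X} {ξ : X → H}
    (hindep : iIndepFun U P) (hU : ∀ i, Measurable (U i))
    (hξ : StronglyMeasurable ξ) {s : Finset ι} {a : ι} (ha : a ∉ s) :
    IndepFun (fun ω => ξ (U a ω)) (fun ω => ∑ i ∈ s, ξ (U i ω)) P := by
  have hsum : (fun ω => ∑ i ∈ s, ξ (U i ω))
      = (fun z : s → X => ∑ i, ξ (z i)) ∘ fun ω (i : s) => U i ω :=
    funext fun ω => (Finset.sum_coe_sort s _).symm
  rw [hsum]
  exact (hindep.indepFun_finset {a} s (Finset.disjoint_singleton_left.mpr ha) hU).comp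
    (hξ.measurable.comp (measurable_pi_apply (⟨a, Finset.mem_singleton_self a⟩ : ({a} : Finset ι))))
    (Finset.stronglyMeasurable_fun_sum Finset.univ
      fun i _ => hξ.comp_measurable (measurable_pi_apply i)).measurable

variable {H : Type*} [NormedAddCommGroup H] [InnerProductSpace ℝ H] [CompleteSpace H]

section IndependentPair

variable [MeasurableSpace H] [BorelSpace H] {A B : Ω → H}

lemma IndepFun.integral_inner (hAB : IndepFun A B P) (hA : Integrable A P)
    (hB : Integrable B P) :
    ∫ ω, ⟪A ω, B ω⟫ ∂P = ⟪∫ ω, A ω ∂P, ∫ ω, B ω ∂P⟫ :=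
  hAB.integral_bilin hA hB (innerSL ℝ)

variable [IsFiniteMeasure P]

lemma IndepFun.integral_norm_add_sq (hAB : IndepFun A B P) (hA : MemLp A 2 P)
    (hB : MemLp B 2 P) (hA0 : ∫ ω, A ω ∂P = 0) :
    ∫ ω, ‖A ω + B ω‖ ^ 2 ∂P = ∫ ω, ‖A ω‖ ^ 2 ∂P + ∫ ω, ‖B ω‖ ^ 2 ∂P := by
  have hA1 := hA.integrable one_le_two
  have hB1 := hB.integrable one_le_two
  have hA2 : Integrable (fun ω => ‖A ω‖ ^ 2) P := hA.integrable_norm_pow'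
  have hB2 : Integrable (fun ω => ‖B ω‖ ^ 2) P := hB.integrable_norm_pow'
  have hcross : Integrable (fun ω => ⟪A ω, B ω⟫) P :=
    hAB.integrable_bilin hA1 hB1 (innerSL ℝ)
  simp_rw [norm_add_sq_real]
  rw [integral_add, integral_add, integral_const_mul, hAB.integral_inner hA1 hB1, hA0,
    inner_zero_left, mul_zero, add_zero]
  all_goals fun_prop

lemma IndepFun.integral_norm_add_pow_four_le (hAB : IndepFun A B P) (hA : MemLp A 4 P)
    (hB : MemLp B 4 P) (hA0 : ∫ ω, A ω ∂P = 0) (hB0 : ∫ ω, B ω ∂P = 0) :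
    ∫ ω, ‖A ω + B ω‖ ^ 4 ∂P ≤ ∫ ω, ‖A ω‖ ^ 4 ∂P
      + 6 * ((∫ ω, ‖A ω‖ ^ 2 ∂P) * ∫ ω, ‖B ω‖ ^ 2 ∂P) + ∫ ω, ‖B ω‖ ^ 4 ∂P := by
  have hA1 : Integrable A P := hA.integrable (by norm_num)
  have hB1 : Integrable B P := hB.integrable (by norm_num)
  have hA2 : MemLp A 2 P := hA.mono_exponent (by norm_num)
  have hB2 : MemLp B 2 P := hB.mono_exponent (by norm_num)
  have hA4 : Integrable (fun ω => ‖A ω‖ ^ 4) P := hA.integrable_norm_pow'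
  have hB4 : Integrable (fun ω => ‖B ω‖ ^ 4) P := hB.integrable_norm_pow'
  have hsq : Measurable fun v : H => ‖v‖ ^ 2 := by fun_prop
  have hcube : Measurable fun v : H => ‖v‖ ^ 2 • v := by fun_prop
  have hAB_sq : IndepFun (fun ω => ‖A ω‖ ^ 2) (fun ω => ‖B ω‖ ^ 2) P := hAB.comp hsq hsq
  have hAB_cube : IndepFun (fun ω => ‖A ω‖ ^ 2 • A ω) B P := hAB.comp hcube measurable_id
  have hBA_cube : IndepFun A (fun ω => ‖B ω‖ ^ 2 • B ω) P := hAB.comp measurable_id hcube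
  have hprod : Integrable (fun ω => ‖A ω‖ ^ 2 * ‖B ω‖ ^ 2) P :=
    hAB_sq.integrable_mul hA2.integrable_norm_pow' hB2.integrable_norm_pow'
  have hcross₁ : Integrable (fun ω => ⟪‖A ω‖ ^ 2 • A ω, B ω⟫) P :=
    hAB_cube.integrable_bilin hA.integrable_norm_sq_smul hB1 (innerSL ℝ)
  have hcross₂ : Integrable (fun ω => ⟪A ω, ‖B ω‖ ^ 2 • B ω⟫) P :=
    hBA_cube.integrable_bilin hA1 hB.integrable_norm_sq_smul (innerSL ℝ)
  calc ∫ ω, ‖A ω + B ω‖ ^ 4 ∂P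
      ≤ ∫ ω, ‖A ω‖ ^ 4 + 6 * (‖A ω‖ ^ 2 * ‖B ω‖ ^ 2) + ‖B ω‖ ^ 4
          + 4 * ⟪‖A ω‖ ^ 2 • A ω, B ω⟫ + 4 * ⟪A ω, ‖B ω‖ ^ 2 • B ω⟫ ∂P :=
        integral_mono (hA.add hB).integrable_norm_pow' (by fun_prop)
          fun ω => norm_add_pow_four_le (A ω) (B ω)
    _ = _ := by
        rw [integral_add, integral_add, integral_add, integral_add, integral_const_mul,
          integral_const_mul, integral_const_mul,
          hAB_sq.integral_fun_mul_eq_mul_integral hA2.integrable_norm_pow'.1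
            hB2.integrable_norm_pow'.1,
          hAB_cube.integral_inner hA.integrable_norm_sq_smul hB1,
          hBA_cube.integral_inner hA1 hB.integrable_norm_sq_smul, hB0, hA0]
        · simp only [inner_zero_left, inner_zero_right, mul_zero, add_zero]
        all_goals fun_prop

end IndependentPair

section IndependentSums

variable {ι X : Type*} [MeasurableSpace X] {U : ι → Ω → X} {ξ : X → H}

theorem iIndepFun.integral_norm_finsetSum_sq (hindep : iIndepFun U P)
    (hU : ∀ i, Measurable (U i)) (hξ : StronglyMeasurable ξ)
    (hmem : ∀ i, MemLp (fun ω => ξ (U i ω)) 2 P) (hzero : ∀ i, ∫ ω, ξ (U i ω) ∂P = 0)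
    (s : Finset ι) :
    ∫ ω, ‖∑ i ∈ s, ξ (U i ω)‖ ^ 2 ∂P = ∑ i ∈ s, ∫ ω, ‖ξ (U i ω)‖ ^ 2 ∂P := by
  classical
  borelize H
  have := hindep.isProbabilityMeasure
  induction s using Finset.induction_on with
  | empty => simp
  | insert a s ha ih =>
    simp only [Finset.sum_insert ha]
    rw [(hindep.indepFun_comp_finsetSum hU hξ ha).integral_norm_add_sq (hmem a)
      (memLp_finsetSum s fun i _ => hmem i) (hzero a), ih]

theorem iIndepFun.integral_norm_finsetSum_pow_four_le (hindep : iIndepFun U P)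
    (hU : ∀ i, Measurable (U i)) (hξ : StronglyMeasurable ξ)
    (hmem : ∀ i, MemLp (fun ω => ξ (U i ω)) 4 P) (hzero : ∀ i, ∫ ω, ξ (U i ω) ∂P = 0)
    (s : Finset ι) :
    ∫ ω, ‖∑ i ∈ s, ξ (U i ω)‖ ^ 4 ∂P
      ≤ 3 * (∑ i ∈ s, ∫ ω, ‖ξ (U i ω)‖ ^ 2 ∂P) ^ 2 + ∑ i ∈ s, ∫ ω, ‖ξ (U i ω)‖ ^ 4 ∂P := by
  classical
  borelize H
  have := hindep.isProbabilityMeasure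
  have hmem2 : ∀ i, MemLp (fun ω => ξ (U i ω)) 2 P := fun i => (hmem i).mono_exponent (by norm_num)
  induction s using Finset.induction_on with
  | empty => simp
  | insert a s ha ih =>
    have hsum0 : ∫ ω, ∑ i ∈ s, ξ (U i ω) ∂P = 0 := by
      rw [integral_finsetSum s fun i _ => (hmem i).integrable (by norm_num)]
      exact Finset.sum_eq_zero fun i _ => hzero i
    have hstep := (hindep.indepFun_comp_finsetSum hU hξ ha).integral_norm_add_pow_four_le
      (hmem a) (memLp_finsetSum s fun i _ => hmem i) (hzero a) hsum0
    rw [hindep.integral_norm_finsetSum_sq hU hξ hmem2 hzero s] at hstep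
    simp only [Finset.sum_insert ha]
    nlinarith [sq_nonneg (∫ ω, ‖ξ (U a ω)‖ ^ 2 ∂P)]

end IndependentSums

end ProbabilityTheory

theorem vstat_variance_bound_general {Ω : Type*} [MeasurableSpace Ω] (P : Measure Ω)
    [IsProbabilityMeasure P]
    {X : Type*} [MeasurableSpace X] (μ : Measure X)
    {H : Type*} [NormedAddCommGroup H] [InnerProductSpace ℝ H] [CompleteSpace H]
    (ξ : X → H) (hmeas : StronglyMeasurable ξ)
    (hzero : (∫ x, ξ x ∂μ) = 0)
    (hm4 : Integrable (fun x => ‖ξ x‖ ^ 4) μ)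
    (n : ℕ) (U : Fin n → Ω → X)
    (hUmeas : ∀ i, Measurable (U i))
    (hindep : iIndepFun U P)
    (hlaw : ∀ i, P.map (U i) = μ) :
    variance (fun ω => (1 / (n : ℝ) ^ 2) * ∑ i, ∑ j, ⟪ξ (U i ω), ξ (U j ω)⟫) P
      ≤ (3 * (∫ x, ‖ξ x‖ ^ 2 ∂μ) ^ 2 + ∫ x, ‖ξ x‖ ^ 4 ∂μ) / (n : ℝ) ^ 2 := by
  have hξ4 : MemLp ξ 4 μ := by
    exact_mod_cast memLp_of_integrable_norm_pow hmeas.aestronglyMeasurable four_ne_zero hm4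
  have hmem : ∀ i, MemLp (fun ω => ξ (U i ω)) 4 P := fun i =>
    ((hlaw i).symm ▸ hξ4 : MemLp ξ 4 (P.map (U i))).comp_of_map (hUmeas i).aemeasurable
  have hcent : ∀ i, ∫ ω, ξ (U i ω) ∂P = 0 := fun i =>
    (integral_comp_of_map_eq (hUmeas i).aemeasurable (hlaw i) hmeas.aestronglyMeasurable).trans
      hzero
  have hmoment : ∀ i (k : ℕ), ∫ ω, ‖ξ (U i ω)‖ ^ k ∂P = ∫ x, ‖ξ x‖ ^ k ∂μ := fun i k =>
    integral_comp_of_map_eq (hUmeas i).aemeasurable (hlaw i) (hmeas.norm.pow k).aestronglyMeasurable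
  have h4 : ∫ ω, ‖∑ i, ξ (U i ω)‖ ^ 4 ∂P
      ≤ (n : ℝ) ^ 2 * (3 * (∫ x, ‖ξ x‖ ^ 2 ∂μ) ^ 2 + ∫ x, ‖ξ x‖ ^ 4 ∂μ) := by
    have h := hindep.integral_norm_finsetSum_pow_four_le hUmeas hmeas hmem hcent Finset.univ
    simp only [hmoment, Finset.sum_const, Finset.card_univ, Fintype.card_fin, nsmul_eq_mul] at h
    have hn : (n : ℝ) ≤ (n : ℝ) ^ 2 := by norm_cast; exact Nat.le_self_pow two_ne_zero n
    have hm4_nonneg : 0 ≤ ∫ x, ‖ξ x‖ ^ 4 ∂μ := integral_nonneg fun x => by positivity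
    nlinarith [mul_le_mul_of_nonneg_right hn hm4_nonneg]
  simp_rw [sum_sum_inner_eq_norm_sum_sq]
  calc _ ≤ ∫ ω, ((1 / (n : ℝ) ^ 2) * ‖∑ i, ξ (U i ω)‖ ^ 2) ^ 2 ∂P :=
        variance_le_expectation_sq
          (((memLp_finsetSum Finset.univ fun i _ => hmem i).1.norm.pow 2).const_mul _)
    _ = (1 / (n : ℝ) ^ 2) ^ 2 * ∫ ω, ‖∑ i, ξ (U i ω)‖ ^ 4 ∂P := by
        rw [← integral_const_mul]; congr 1 with ω; ring
    _ ≤ (1 / (n : ℝ) ^ 2) ^ 2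
          * ((n : ℝ) ^ 2 * (3 * (∫ x, ‖ξ x‖ ^ 2 ∂μ) ^ 2 + ∫ x, ‖ξ x‖ ^ 4 ∂μ)) := by
        gcongr
    _ = _ := by
        rcases eq_or_ne (n : ℝ) 0 with hn | hn
        · simp [hn]
        · field_simp

/-- **Variance bound for the V-statistic.** For a centered witness map `ξ` with finite
second moment `m₂` and fourth moment `m₄`, the variance of the V-statistic
`Vₙ = (1/n²) Σᵢⱼ ⟪ξ(Uᵢ), ξ(Uⱼ)⟫` built from i.i.d. `U₁,…,Uₙ ∼ μ` satisfies
`Var(Vₙ) ≤ (3 m₂² + m₄)/n²`. -/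
theorem vstat_variance_bound {Ω : Type*} [MeasurableSpace Ω] (P : Measure Ω)
    [IsProbabilityMeasure P]
    {X : Type*} [MeasurableSpace X] (μ : Measure X) [IsProbabilityMeasure μ]
    {H : Type*} [NormedAddCommGroup H] [InnerProductSpace ℝ H] [CompleteSpace H]
    (ξ : X → H) (hmeas : StronglyMeasurable ξ)
    (hint : Integrable ξ μ) (hzero : (∫ x, ξ x ∂μ) = 0)
    (hm2 : Integrable (fun x => ‖ξ x‖ ^ 2) μ)
    (hm4 : Integrable (fun x => ‖ξ x‖ ^ 4) μ)
    (n : ℕ) (hn : 1 ≤ n) (U : Fin n → Ω → X)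
    (hUmeas : ∀ i, Measurable (U i))
    (hindep : iIndepFun U P)
    (hlaw : ∀ i, P.map (U i) = μ) :
    variance (fun ω => (1 / (n : ℝ) ^ 2) * ∑ i, ∑ j, ⟪ξ (U i ω), ξ (U j ω)⟫) P
      ≤ (3 * (∫ x, ‖ξ x‖ ^ 2 ∂μ) ^ 2 + ∫ x, ‖ξ x‖ ^ 4 ∂μ) / (n : ℝ) ^ 2 :=
  vstat_variance_bound_general P μ ξ hmeas hzero hm4 n U hUmeas hindep hlaw
end
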